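/- Under SCAR and the PU condition, and conditional independence consequences thereof, E[ℓ(-g(X)) | Y=1, S=-1] = E[ℓ(-g(X)) | S=1], provided P(Y=1, S=-1) > 0 and P(S=1) > 0. -/
import Mathlib

open scoped Classical
open Finset

/-- Probability of an event `A` under pmf `P` on a finite sample space. -/
noncomputable def pr {Ω : Type*} [Fintype Ω] (P : Ω → ℝ) (A : Ω → Prop) : ℝ :=
  ∑ ω, if A ω then P ω else 0

/-- Conditional expectation `E[f | A]` under pmf `P`. -/
noncomputable def cex {Ω : Type*} [Fintype Ω] (P : Ω → ℝ) (A : Ω → Prop) (f : Ω → ℝ) : ℝ :=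
  (∑ ω, if A ω then P ω * f ω else 0) / pr P A

/-- Expectation `E[f]` under pmf `P`. -/
noncomputable def ex {Ω : Type*} [Fintype Ω] (P : Ω → ℝ) (f : Ω → ℝ) : ℝ :=
  ∑ ω, P ω * f ω

lemma pr_nonneg' {Ω : Type*} [Fintype Ω] (P : Ω → ℝ) (hP : ∀ ω, 0 ≤ P ω) (A : Ω → Prop) :
    0 ≤ pr P A :=
  Finset.sum_nonneg fun ω _ => by split <;> simp [hP ω]

lemma pr_zero_imp' {Ω : Type*} [Fintype Ω] (P : Ω → ℝ) (hP : ∀ ω, 0 ≤ P ω) (A : Ω → Prop)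
    (h : pr P A = 0) : ∀ ω, A ω → P ω = 0 := by
  intro ω hω
  have := (Finset.sum_eq_zero_iff_of_nonneg
    (fun ω _ => by split <;> simp [hP ω] : ∀ ω ∈ Finset.univ, 0 ≤ if A ω then P ω else 0)).1 h ω
    (Finset.mem_univ ω)
  simpa [hω] using this

theorem stmt6 {Ω 𝒳 : Type*} [Fintype Ω] [Fintype 𝒳]
    (P : Ω → ℝ) (hP : ∀ ω, 0 ≤ P ω) (hPsum : ∑ ω, P ω = 1)
    (X : Ω → 𝒳) (Y S : Ω → ℤ)
    (hY : ∀ ω, Y ω = 1 ∨ Y ω = -1) (hS : ∀ ω, S ω = 1 ∨ S ω = -1)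
    (hPU : pr P (fun ω => Y ω = -1 ∧ S ω = 1) = 0)
    (hSCAR : ∀ x : 𝒳, 0 < pr P (fun ω => Y ω = 1 ∧ X ω = x) →
      pr P (fun ω => S ω = 1 ∧ Y ω = 1 ∧ X ω = x) / pr P (fun ω => Y ω = 1 ∧ X ω = x)
        = pr P (fun ω => S ω = 1 ∧ Y ω = 1) / pr P (fun ω => Y ω = 1))
    (hYS : 0 < pr P (fun ω => Y ω = 1 ∧ S ω = -1)) (hS1 : 0 < pr P (fun ω => S ω = 1))
    (g : 𝒳 → ℝ) (ℓ : ℝ → ℝ) :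
    cex P (fun ω => Y ω = 1 ∧ S ω = -1) (fun ω => ℓ (-g (X ω)))
      = cex P (fun ω => S ω = 1) (fun ω => ℓ (-g (X ω))) := by
  set f : 𝒳 → ℝ := fun x => ℓ (-g x) with hf
  set a : 𝒳 → ℝ := fun x => pr P (fun ω => Y ω = 1 ∧ X ω = x) with ha
  set b : 𝒳 → ℝ := fun x => pr P (fun ω => S ω = 1 ∧ Y ω = 1 ∧ X ω = x) with hb
  set d : 𝒳 → ℝ := fun x => pr P (fun ω => (Y ω = 1 ∧ S ω = -1) ∧ X ω = x) with hd
  set A : ℝ := pr P (fun ω => Y ω = 1) with hA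
  set B : ℝ := pr P (fun ω => S ω = 1 ∧ Y ω = 1) with hB
  set D : ℝ := pr P (fun ω => Y ω = 1 ∧ S ω = -1) with hD
  have hnull : ∀ ω, Y ω = -1 → S ω = 1 → P ω = 0 := fun ω h1 h2 =>
    pr_zero_imp' P hP _ hPU ω ⟨h1, h2⟩
  -- split a into b + d
  have habd : ∀ x, a x = b x + d x := by
    intro x
    simp only [ha, hb, hd, pr, ← Finset.sum_add_distrib]
    refine Finset.sum_congr rfl fun ω _ => ?_
    rcases hS ω with h | h <;> simp [h]
  have hABD : A = B + D := by
    simp only [hA, hB, hD, pr, ← Finset.sum_add_distrib]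
    refine Finset.sum_congr rfl fun ω _ => ?_
    rcases hS ω with h | h <;> simp [h]
  -- S=1 events reduce to S=1 ∧ Y=1
  have hSB : pr P (fun ω => S ω = 1) = B := by
    simp only [hB, pr]
    refine Finset.sum_congr rfl fun ω _ => ?_
    rcases hY ω with h | h
    · simp [h]
    · by_cases hs : S ω = 1
      · simp [h, hs, hnull ω h hs]
      · simp [hs]
  have hSxb : ∀ x, pr P (fun ω => S ω = 1 ∧ X ω = x) = b x := by
    intro x
    simp only [hb, pr]
    refine Finset.sum_congr rfl fun ω _ => ?_
    rcases hY ω with h | h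
    · simp [h]
    · by_cases hs : S ω = 1
      · simp [h, hs, hnull ω h hs]
      · simp [hs]
  -- positivity
  have haxn : ∀ x, 0 ≤ a x := fun x => pr_nonneg' P hP _
  have hbxn : ∀ x, 0 ≤ b x := fun x => pr_nonneg' P hP _
  have hdxn : ∀ x, 0 ≤ d x := fun x => pr_nonneg' P hP _
  have hBpos : 0 < B := hSB ▸ hS1
  have hDpos : 0 < D := hYS
  have hApos : 0 < A := by rw [hABD]; linarith
  set c : ℝ := B / A with hc
  have hcpos : 0 < c := div_pos hBpos hApos
  have hBcA : B = c * A := by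
    rw [hc, div_mul_cancel₀ _ (ne_of_gt hApos)]
  have hDc : D = (1 - c) * A := by
    have h : (1 - c) * A = A - c * A := by ring
    rw [h, ← hBcA, hABD]; ring
  have h1cpos : 0 < 1 - c := by
    have := mul_pos_iff.mp (hDc ▸ hDpos)
    rcases this with ⟨h, _⟩ | ⟨_, h⟩
    · exact h
    · linarith
  -- SCAR: b x = c * a x for all x
  have hbca : ∀ x, b x = c * a x := by
    intro x
    by_cases hx : 0 < a x
    · have h := hSCAR x hx
      have h' : b x / a x = c := h
      rw [div_eq_iff (ne_of_gt hx)] at h'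
      exact h'
    · have hax : a x = 0 := le_antisymm (not_lt.mp hx) (haxn x)
      have : b x = 0 := by have := habd x; have := hbxn x; have := hdxn x; linarith
      rw [this, hax, mul_zero]
  have hdca : ∀ x, d x = (1 - c) * a x := by
    intro x
    have h1 := habd x
    have h2 := hbca x
    linarith [h1, h2, (by ring : c * a x + (1 - c) * a x = a x)]
  -- grouping lemma
  have group : ∀ A' : Ω → Prop,
      (∑ ω, if A' ω then P ω * ℓ (-g (X ω)) else 0)
        = ∑ x, f x * pr P (fun ω => A' ω ∧ X ω = x) := by
    intro A'
    have key : ∀ ω, (if A' ω then P ω * ℓ (-g (X ω)) else 0)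
        = ∑ x, f x * (if A' ω ∧ X ω = x then P ω else 0) := by
      intro ω
      rw [Finset.sum_eq_single (X ω)]
      · by_cases h : A' ω <;> simp [h, hf, mul_comm]
      · intro x _ hx
        have : ¬ (X ω = x) := fun h => hx h.symm
        simp [this]
      · simp
    calc (∑ ω, if A' ω then P ω * ℓ (-g (X ω)) else 0)
        = ∑ ω, ∑ x, f x * (if A' ω ∧ X ω = x then P ω else 0) :=
          Finset.sum_congr rfl fun ω _ => key ω
      _ = ∑ x, ∑ ω, f x * (if A' ω ∧ X ω = x then P ω else 0) := Finset.sum_comm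
      _ = ∑ x, f x * pr P (fun ω => A' ω ∧ X ω = x) := by
          refine Finset.sum_congr rfl fun x _ => ?_
          rw [← Finset.mul_sum]
          congr 1
          unfold pr
          refine Finset.sum_congr rfl fun ω _ => ?_
          by_cases h : A' ω ∧ X ω = x <;> simp [h]
  have e1 := group (fun ω => Y ω = 1 ∧ S ω = -1)
  have e2 := group (fun ω => S ω = 1)
  have hnum1 : (∑ x, f x * pr P (fun ω => (Y ω = 1 ∧ S ω = -1) ∧ X ω = x))
      = (1 - c) * ∑ x, f x * a x := by
    rw [Finset.mul_sum]
    refine Finset.sum_congr rfl fun x _ => ?_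
    rw [show pr P (fun ω => (Y ω = 1 ∧ S ω = -1) ∧ X ω = x) = d x from rfl, hdca x]; ring
  have hnum2 : (∑ x, f x * pr P (fun ω => S ω = 1 ∧ X ω = x))
      = c * ∑ x, f x * a x := by
    rw [Finset.mul_sum]
    refine Finset.sum_congr rfl fun x _ => ?_
    rw [hSxb x, hbca x]; ring
  calc cex P (fun ω => Y ω = 1 ∧ S ω = -1) (fun ω => ℓ (-g (X ω)))
      = (∑ x, f x * pr P (fun ω => (Y ω = 1 ∧ S ω = -1) ∧ X ω = x)) / D :=
        congrArg (· / D) e1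
    _ = ((1 - c) * ∑ x, f x * a x) / ((1 - c) * A) := by rw [hnum1, hDc]
    _ = (∑ x, f x * a x) / A := mul_div_mul_left _ _ (ne_of_gt h1cpos)
    _ = (c * ∑ x, f x * a x) / (c * A) := (mul_div_mul_left _ _ (ne_of_gt hcpos)).symm
    _ = (∑ x, f x * pr P (fun ω => S ω = 1 ∧ X ω = x)) / pr P (fun ω => S ω = 1) := by
        rw [hnum2, hSB, hBcA]
    _ = cex P (fun ω => S ω = 1) (fun ω => ℓ (-g (X ω))) :=
        (congrArg (· / pr P (fun ω => S ω = 1)) e2).symm
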